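/- arXiv:math/0101210 — 5 statements merged into one kernel-verified Lean document; each statement's English description precedes it below -/
import Mathlib

section
/- Let F be a differentially closed field of characteristic 0. Let A ∈ F{y} \ F and suppose there exists a nonzero B ∈ F{y} such that every indeterminate yⱼ occurring in B has j < ord A, and such that only finitely many roots of A (elements α ∈ F with A(α) = 0) fail to be roots of B. Then ord A = 0. -/
open MvPolynomial

/-- The order of a differential polynomial: the largest `r` such that `yᵣ` occurs. -/
noncomputable def dOrder {F : Type*} [CommSemiring F] (A : MvPolynomial ℕ F) : ℕ :=
  A.vars.sup id

/-- Evaluation of a differential polynomial `A ∈ F{y}` at `α`: substitute `δᵏ α` for `yₖ`. -/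
noncomputable def deval {F : Type*} [CommRing F] (δ : Derivation ℤ F F) (α : F)
    (A : MvPolynomial ℕ F) : F :=
  aeval (fun k => (⇑δ)^[k] α) A

/-- A differential field `(F, δ)` of characteristic 0 is differentially closed if for any
`A ∈ F{y} \ F` and any nonzero `B ∈ F{y}` all of whose variables `yⱼ` have `j < ord A`,
there is `α ∈ F` with `A(α) = 0` and `B(α) ≠ 0`. -/
def IsDiffClosed {F : Type*} [Field F] (δ : Derivation ℤ F F) : Prop :=
  ∀ A B : MvPolynomial ℕ F, (∀ c : F, A ≠ C c) → B ≠ 0 →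
    (∀ j ∈ B.vars, j < dOrder A) →
    ∃ α : F, deval δ α A = 0 ∧ deval δ α B ≠ 0


/-- (Kac, Lemma 1(b).) Let `F` be a differentially closed field of characteristic 0,
`A ∈ F{y} \ F`, and suppose there is a nonzero `B ∈ F{y}` all of whose variables `yⱼ` satisfy
`j < ord A`, such that only finitely many roots of `A` are not roots of `B`.
Then `ord A = 0`. -/
theorem stmt5 {F : Type} [Field F] [CharZero F] (δF : Derivation ℤ F F)
    (hF : IsDiffClosed δF)
    (A B : MvPolynomial ℕ F) (hA : ∀ c : F, A ≠ C c) (hB : B ≠ 0)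
    (hordB : ∀ j ∈ B.vars, j < dOrder A)
    (hfin : {α : F | deval δF α A = 0 ∧ deval δF α B ≠ 0}.Finite) :
    dOrder A = 0 := by
  by_contra h0
  have hpos : 0 < dOrder A := Nat.pos_of_ne_zero h0
  set S := hfin.toFinset with hS
  have hXC : ∀ a : F, (X 0 - C a : MvPolynomial ℕ F) ≠ 0 := by
    intro a h
    have := congrArg totalDegree (sub_eq_zero.mp h)
    simp [totalDegree_X, totalDegree_C] at this
  have hprodne : (∏ a ∈ S, (X (0:ℕ) - C a : MvPolynomial ℕ F)) ≠ 0 :=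
    Finset.prod_ne_zero_iff.mpr (fun a _ => hXC a)
  set B' := B * ∏ a ∈ S, (X (0:ℕ) - C a : MvPolynomial ℕ F) with hB'
  have hB'ne : B' ≠ 0 := mul_ne_zero hB hprodne
  have hvars : ∀ j ∈ B'.vars, j < dOrder A := by
    intro j hj
    have h1 := vars_mul B (∏ a ∈ S, (X (0:ℕ) - C a : MvPolynomial ℕ F)) hj
    rcases Finset.mem_union.mp h1 with h | h
    · exact hordB j h
    · have h2 := vars_prod (f := fun a : F => (X (0:ℕ) - C a : MvPolynomial ℕ F)) (s := S) h
      rcases Finset.mem_biUnion.mp h2 with ⟨a, _, ha⟩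
      have h3 := vars_sub_subset _ ha
      rcases Finset.mem_union.mp h3 with h4 | h4
      · rw [vars_X] at h4
        simp only [Finset.mem_singleton] at h4
        simpa [h4] using hpos
      · simp [vars_C] at h4
  obtain ⟨α, hα1, hα2⟩ := hF A B' hA hB'ne hvars
  have hmem : α ∈ S := by
    rw [hS, Set.Finite.mem_toFinset]
    refine ⟨hα1, ?_⟩
    intro hB0
    apply hα2
    rw [hB']
    unfold deval
    rw [map_mul]
    unfold deval at hB0
    rw [hB0, zero_mul]
  apply hα2
  rw [hB']
  unfold deval
  rw [map_mul, map_prod]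
  apply mul_eq_zero_of_right
  apply Finset.prod_eq_zero hmem
  simp
end

section
/- Let F be a differential field of characteristic 0 satisfying the extension property: for every differential algebra S over ℚ with no zero divisors, every differential subalgebra R of S over which S is differentially finitely generated, and every nonzero b ∈ S, there exists a nonzero a ∈ R such that every differential ring homomorphism φ : R → F with φ(a) ≠ 0 extends to a differential ring homomorphism ψ : S → F with ψ(b) ≠ 0. Then for every prime differential ideal 𝒥 of F{y} and every B ∈ F{y} \ 𝒥, there exists α ∈ F such that f(α) = 0 for all f ∈ 𝒥 and B(α) ≠ 0. -/
/-!
Pass to the differential domain `S = F{y}/𝒥`, which is differentially generated by the class of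
`y` over its copy of `F`. On that copy the inverse of `F ≅ F·1` is a differential homomorphism
into `F`, nonzero on every nonzero element, so the extension property yields a differential
`ψ : S → F` fixing `F` with `ψ(B) ≠ 0`. Such a `ψ` is evaluation at `α = ψ(y)`: it sends `yₖ`
to `δᵏ α`, so it kills `𝒥` and not `B`.
-/

open MvPolynomial

theorem Algebra.algebraMap_botEquiv {F S : Type*} [Field F] [Semiring S] [Nontrivial S]
    [Algebra F S] (r : (⊥ : Subalgebra F S)) : algebraMap F S (botEquiv F S r) = r := by
  have := congrArg Subtype.val ((botEquiv F S).symm_apply_apply r)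
  rwa [botEquiv_symm_apply] at this

namespace Derivation

variable {R A : Type*} [CommRing R] [CommRing A] [Algebra R A] (δ : Derivation R A A)
  (J : Ideal A) (hJ : ∀ a ∈ J, δ a ∈ J)

noncomputable def quotient : Derivation R (A ⧸ J) (A ⧸ J) :=
  Derivation.mk'
    (Submodule.liftQ (J.restrictScalars R) ((Ideal.Quotient.mkₐ R J).toLinearMap ∘ₗ δ.toLinearMap)
        (fun a ha => (Ideal.Quotient.eq_zero_iff_mem.2 (hJ a ha) :)) ∘ₗ
      (Submodule.Quotient.restrictScalarsEquiv R J).symm.toLinearMap)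
    (by
      intro x y
      obtain ⟨a, rfl⟩ := Ideal.Quotient.mk_surjective x
      obtain ⟨b, rfl⟩ := Ideal.Quotient.mk_surjective y
      rw [← map_mul]
      change Ideal.Quotient.mk J (δ (a * b)) =
        Ideal.Quotient.mk J a * Ideal.Quotient.mk J (δ b) +
          Ideal.Quotient.mk J b * Ideal.Quotient.mk J (δ a)
      simp only [leibniz, smul_eq_mul, map_add, map_mul])

@[simp]
theorem quotient_mk (a : A) :
    δ.quotient J hJ (Ideal.Quotient.mk J a) = Ideal.Quotient.mk J (δ a) :=
  rfl

theorem iterate_quotient_mk (k : ℕ) (a : A) :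
    (⇑(δ.quotient J hJ))^[k] (Ideal.Quotient.mk J a) = Ideal.Quotient.mk J ((⇑δ)^[k] a) :=
  (Function.Semiconj.iterate_right (fun a => (quotient_mk δ J hJ a).symm) k a).symm

end Derivation

theorem MvPolynomial.adjoin_range_comp_C_union_range_comp_X_eq_top {K σ F S : Type*}
    [CommRing K] [CommRing F] [CommRing S] [Algebra K S] {f : MvPolynomial σ F →+* S}
    (hf : Function.Surjective f) :
    Algebra.adjoin K (Set.range (f ∘ C) ∪ Set.range (f ∘ X)) = ⊤ := by
  rw [eq_top_iff]
  rintro s -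
  obtain ⟨p, rfl⟩ := hf s
  induction p using MvPolynomial.induction_on with
  | C c => exact Algebra.subset_adjoin (Or.inl ⟨c, rfl⟩)
  | add p q hp hq => simpa only [map_add] using add_mem hp hq
  | mul_X p n hp =>
    rw [map_mul]
    exact mul_mem hp (Algebra.subset_adjoin (Or.inr ⟨n, rfl⟩))

section DifferentialPolynomial

variable {F : Type*} [CommRing F] {δP : Derivation ℤ (MvPolynomial ℕ F) (MvPolynomial ℕ F)}

theorem iterate_derivation_X_zero (hδPX : ∀ k : ℕ, δP (X k) = X (k + 1)) (k : ℕ) :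
    (⇑δP)^[k] (X 0) = X k := by
  induction k with
  | zero => rfl
  | succ k ih => rw [Function.iterate_succ_apply', ih, hδPX]

theorem adjoin_bot_union_range_iterate_quotient_X_zero_eq_top {K : Type*} [CommRing K]
    [Algebra K F] (hδPX : ∀ k : ℕ, δP (X k) = X (k + 1)) (J : Ideal (MvPolynomial ℕ F))
    (hJ : ∀ f ∈ J, δP f ∈ J) :
    Algebra.adjoin K (((⊥ : Subalgebra F (MvPolynomial ℕ F ⧸ J)) : Set _) ∪
      Set.range fun k => (⇑(δP.quotient J hJ))^[k] (Ideal.Quotient.mk J (X 0))) = ⊤ := by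
  refine eq_top_iff.2 <| (adjoin_range_comp_C_union_range_comp_X_eq_top
    (K := K) Ideal.Quotient.mk_surjective).ge.trans <|
      Algebra.adjoin_mono <| Set.union_subset_union ?_ ?_
  · rw [Algebra.coe_bot]
    rintro _ ⟨c, rfl⟩
    exact ⟨c, rfl⟩
  · rintro _ ⟨k, rfl⟩
    exact ⟨k, (δP.iterate_quotient_mk J hJ k (X 0)).trans
      (congrArg (Ideal.Quotient.mk J) (iterate_derivation_X_zero hδPX k))⟩

theorem ringHom_apply_eq_deval {δF : Derivation ℤ F F} (hδPX : ∀ k : ℕ, δP (X k) = X (k + 1))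
    (ψ : MvPolynomial ℕ F →+* F) (hψC : ∀ c, ψ (C c) = c)
    (hψδ : ∀ p, ψ (δP p) = δF (ψ p)) (p : MvPolynomial ℕ F) :
    ψ p = deval δF (ψ (X 0)) p := by
  have hψX (k : ℕ) : ψ (X k) = (⇑δF)^[k] (ψ (X 0)) := by
    rw [← iterate_derivation_X_zero hδPX k]
    exact Function.Semiconj.iterate_right hψδ k (X 0)
  suffices ψ = (aeval fun k => (⇑δF)^[k] (ψ (X 0))).toRingHom from
    congrArg (· p) this
  exact ringHom_ext (by simpa using hψC) (by simpa using hψX)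

end DifferentialPolynomial

/-- (Kac, Theorem 3, (i) ⇒ (c).) If a differential field `F` of characteristic 0 has the
homomorphism-extension property of Theorem 1, then for every prime differential ideal `𝒥` of
`F{y}` and every `B ∈ F{y} \ 𝒥` there is `α ∈ F` with `f(α) = 0` for all `f ∈ 𝒥` and
`B(α) ≠ 0`.  Here `F{y}` carries the unique derivation `δP` extending `δF` with
`δP yₖ = yₖ₊₁`. -/
theorem stmt6 {F : Type} [Field F] [CharZero F] (δF : Derivation ℤ F F)
    (hext : ∀ (S : Type) [CommRing S] [Algebra ℚ S] [IsDomain S]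
      (δS : Derivation ℤ S S) (R : Subalgebra ℚ S) (hRδ : ∀ r ∈ R, δS r ∈ R),
      (∃ (n : ℕ) (x : Fin n → S),
        Algebra.adjoin ℚ ((R : Set S) ∪
          {s : S | ∃ (i : Fin n) (k : ℕ), s = (⇑δS)^[k] (x i)}) = ⊤) →
      ∀ b : S, b ≠ 0 →
      ∃ a : R, (a : S) ≠ 0 ∧
        ∀ φ : R →+* F, (∀ r : R, φ ⟨δS r, hRδ r r.2⟩ = δF (φ r)) → φ a ≠ 0 →
          ∃ ψ : S →+* F, (∀ s : S, ψ (δS s) = δF (ψ s)) ∧ (∀ r : R, ψ r = φ r) ∧ ψ b ≠ 0)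
    (δP : Derivation ℤ (MvPolynomial ℕ F) (MvPolynomial ℕ F))
    (hδPC : ∀ a : F, δP (C a) = C (δF a))
    (hδPX : ∀ k : ℕ, δP (X k) = X (k + 1))
    (J : Ideal (MvPolynomial ℕ F)) (hJprime : J.IsPrime) (hJdiff : ∀ f ∈ J, δP f ∈ J)
    (B : MvPolynomial ℕ F) (hB : B ∉ J) :
    ∃ α : F, (∀ f ∈ J, deval δF α f = 0) ∧ deval δF α B ≠ 0 := by
  have := hJprime
  let mk := Ideal.Quotient.mk J
  let δS := δP.quotient J hJdiff
  let R : Subalgebra ℚ (MvPolynomial ℕ F ⧸ J) := (⊥ : Subalgebra F _).restrictScalars ℚ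
  let φ : R →+* F := (Algebra.botEquiv F (MvPolynomial ℕ F ⧸ J) : (⊥ : Subalgebra F _) →+* F)
  have hφ (r : R) : algebraMap F (MvPolynomial ℕ F ⧸ J) (φ r) = r :=
    Algebra.algebraMap_botEquiv r
  have hδS (c : F) :
      δS (algebraMap F (MvPolynomial ℕ F ⧸ J) c) = algebraMap F (MvPolynomial ℕ F ⧸ J) (δF c) :=
    congrArg mk (hδPC c)
  have hRδ : ∀ r ∈ R, δS r ∈ R := by
    rintro _ ⟨c, rfl⟩
    exact ⟨δF c, (hδS c).symm⟩
  have hgen : ∃ (n : ℕ) (x : Fin n → MvPolynomial ℕ F ⧸ J),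
      Algebra.adjoin ℚ ((R : Set _) ∪ {s | ∃ (i : Fin n) (k : ℕ), s = (⇑δS)^[k] (x i)}) = ⊤ :=
    ⟨1, fun _ => mk (X 0), eq_top_iff.2 <|
      (adjoin_bot_union_range_iterate_quotient_X_zero_eq_top hδPX J hJdiff).ge.trans <|
        Algebra.adjoin_mono <| Set.union_subset_union subset_rfl fun _ ⟨k, hk⟩ => ⟨0, k, hk.symm⟩⟩
  obtain ⟨a, ha, hextend⟩ :=
    hext _ δS R hRδ hgen (mk B) (mt Ideal.Quotient.eq_zero_iff_mem.1 hB)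
  obtain ⟨ψ, hψδ, hψφ, hψB⟩ := hextend φ
    (fun r => (algebraMap F (MvPolynomial ℕ F ⧸ J)).injective <| by rw [hφ, ← hδS, hφ]; rfl)
    (fun h => ha (by rw [← hφ, h, map_zero]))
  have hψC (c : F) : ψ (mk (C c)) = c :=
    (hψφ ⟨_, c, rfl⟩).trans ((algebraMap F (MvPolynomial ℕ F ⧸ J)).injective (hφ _))
  have hdeval (p : MvPolynomial ℕ F) : ψ (mk p) = deval δF (ψ (mk (X 0))) p :=
    ringHom_apply_eq_deval hδPX (ψ.comp mk) hψC (fun p => hψδ (mk p)) p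
  refine ⟨ψ (mk (X 0)), fun f hf => ?_, ?_⟩
  · rw [← hdeval, Ideal.Quotient.eq_zero_iff_mem.2 hf, map_zero]
  · rwa [← hdeval]
end

section
/- Let F be a differential field of characteristic 0 with the following property: whenever A, B ∈ F{y} are such that A ∉ F is irreducible in F{y}, B is not divisible by A, and ord A ≥ ord B (or B ∈ F is nonzero), there exists α ∈ F with A(α) = 0, B(α) ≠ 0, and S_A(α) ≠ 0, where S_A = ∂A/∂y_{ord A} is the separant of A. Then F is differentially closed. -/
open MvPolynomial

/-- The variable-isolating algebra isomorphism: view `F{y}` as polynomials in `yᵢ`. -/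
noncomputable def isoAt {F : Type} [Field F] (i : ℕ) :
    MvPolynomial ℕ F ≃ₐ[F] Polynomial (MvPolynomial {j : ℕ // j ≠ i} F) :=
  (renameEquiv F (Equiv.optionSubtypeNe i).symm).trans (optionEquivLeft F {j : ℕ // j ≠ i})

lemma isoAt_rename {F : Type} [Field F] (i : ℕ) (q : MvPolynomial {j : ℕ // j ≠ i} F) :
    isoAt i (rename (Subtype.val : {j : ℕ // j ≠ i} → ℕ) q) = Polynomial.C q := by
  show (optionEquivLeft F {j : ℕ // j ≠ i})
    (rename (Equiv.optionSubtypeNe i).symm ((rename Subtype.val) q)) = _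
  rw [rename_rename]
  have h1 : ((Equiv.optionSubtypeNe i).symm ∘ (Subtype.val : {j : ℕ // j ≠ i} → ℕ))
      = fun b => some b := by
    funext b; exact Equiv.optionSubtypeNe_symm_of_ne b.2
  rw [h1, optionEquivLeft_apply, aeval_rename]
  have h2 : ((fun o : Option {j : ℕ // j ≠ i} =>
      o.elim Polynomial.X fun s => Polynomial.C (X s)) ∘ (fun b => some b))
      = fun b => (Polynomial.CAlgHom (R := F)
          (A := MvPolynomial {j : ℕ // j ≠ i} F)) (X b) := rfl
  rw [h2]
  rw [show (aeval fun b : {j : ℕ // j ≠ i} =>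
        (Polynomial.CAlgHom (R := F) (A := MvPolynomial {j : ℕ // j ≠ i} F)) (X b)) q
      = Polynomial.CAlgHom (aeval X q) from (comp_aeval_apply _ _ _).symm]
  rw [aeval_X_left_apply]; rfl

lemma not_mem_vars_iff_isoAt {F : Type} [Field F] (i : ℕ) (p : MvPolynomial ℕ F) :
    i ∉ p.vars ↔ ∃ c, isoAt i p = Polynomial.C c := by
  constructor
  · intro h
    obtain ⟨q, rfl⟩ := exists_rename_eq_of_vars_subset_range p ((↑) : {j : ℕ // j ≠ i} → ℕ)
      Subtype.val_injective (by
        intro j hj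
        exact ⟨⟨j, fun hji => h (hji ▸ hj)⟩, rfl⟩)
    exact ⟨q, isoAt_rename i q⟩
  · rintro ⟨c, hc⟩
    have : p = rename (Subtype.val : {j : ℕ // j ≠ i} → ℕ) c :=
      (isoAt i).injective (by rw [hc, isoAt_rename])
    subst this
    intro h
    obtain ⟨b, _, hb⟩ := mem_vars_rename _ _ h
    exact b.2 hb

/-- If `i` occurs in a divisor of a nonzero `B`, it occurs in `B`. -/
lemma mem_vars_of_dvd {F : Type} [Field F] {i : ℕ} {p B : MvPolynomial ℕ F}
    (hB : B ≠ 0) (hd : p ∣ B) (hi : i ∈ p.vars) : i ∈ B.vars := by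
  obtain ⟨q, rfl⟩ := hd
  by_contra hB'
  obtain ⟨c, hc⟩ := (not_mem_vars_iff_isoAt i _).1 hB'
  have hp0 : p ≠ 0 := by rintro rfl; simp at hi
  have hq0 : q ≠ 0 := by rintro rfl; simp at hB
  have hmul : isoAt i (p * q) = isoAt i p * isoAt i q := map_mul _ _ _
  have hip : (isoAt i p).natDegree = 0 := by
    have h1 : (isoAt i p) ≠ 0 := fun h => hp0 ((isoAt i).injective (by simpa using h))
    have h2 : (isoAt i q) ≠ 0 := fun h => hq0 ((isoAt i).injective (by simpa using h))
    have := Polynomial.natDegree_mul h1 h2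
    rw [← hmul, hc, Polynomial.natDegree_C] at this
    omega
  obtain ⟨c', hc'⟩ := Polynomial.natDegree_eq_zero.1 hip
  exact ((not_mem_vars_iff_isoAt i p).2 ⟨c', hc'.symm⟩) hi

/-- Units of `F{y}` have no variables. -/
lemma vars_of_isUnit {F : Type} [Field F] {u : MvPolynomial ℕ F} (hu : IsUnit u) (i : ℕ) :
    i ∉ u.vars := by
  rw [not_mem_vars_iff_isoAt]
  have : IsUnit (isoAt i u) := hu.map (isoAt i)
  obtain ⟨c', hc'⟩ := Polynomial.natDegree_eq_zero.1 (Polynomial.natDegree_eq_zero_of_isUnit this)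
  exact ⟨c', hc'.symm⟩

lemma exists_mem_vars_of_multiset_prod {F : Type} [Field F]
    (s : Multiset (MvPolynomial ℕ F)) {i : ℕ} (h : i ∈ s.prod.vars) :
    ∃ p ∈ s, i ∈ p.vars := by
  induction s using Multiset.induction with
  | empty => rw [Multiset.prod_zero] at h; simp [vars_one] at h
  | cons a s ih =>
    rw [Multiset.prod_cons] at h
    rcases Finset.mem_union.1 (vars_mul _ _ h) with h' | h'
    · exact ⟨a, Multiset.mem_cons_self _ _, h'⟩
    · obtain ⟨p, hp, hp'⟩ := ih h'
      exact ⟨p, Multiset.mem_cons_of_mem hp, hp'⟩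

lemma exists_irreducible_factor_mem_vars {F : Type} [Field F] {A : MvPolynomial ℕ F} {i : ℕ}
    (hA : A ≠ 0) (hi : i ∈ A.vars) : ∃ P, Irreducible P ∧ P ∣ A ∧ i ∈ P.vars := by
  obtain ⟨u, hu⟩ := (UniqueFactorizationMonoid.factors_prod hA)
  have hA' : i ∈ ((UniqueFactorizationMonoid.factors A).prod * ↑u).vars := by
    rwa [hu]
  rcases Finset.mem_union.1 (vars_mul _ _ hA') with h' | h'
  · obtain ⟨P, hP, hPi⟩ := exists_mem_vars_of_multiset_prod _ h'
    exact ⟨P, UniqueFactorizationMonoid.irreducible_of_factor P hP,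
      UniqueFactorizationMonoid.dvd_of_mem_factors hP, hPi⟩
  · exact absurd h' (vars_of_isUnit u.isUnit i)

/-- (Kac, Theorem 3, (b) ⇒ (a).) Let `F` be a differential field of characteristic 0 such that
whenever `A ∈ F{y} \ F` is irreducible, `B` is not divisible by `A` and `ord B ≤ ord A`
(a nonzero constant `B` being allowed), there is `α ∈ F` with `A(α) = 0`, `B(α) ≠ 0` and
`S_A(α) ≠ 0`, where `S_A = ∂A/∂y_{ord A}` is the separant.  Then `F` is differentially
closed. -/
theorem stmt8 {F : Type} [Field F] [CharZero F] (δF : Derivation ℤ F F)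
    (hb : ∀ A B : MvPolynomial ℕ F, Irreducible A → (∀ c : F, A ≠ C c) →
      ¬ A ∣ B → dOrder B ≤ dOrder A →
      ∃ α : F, deval δF α A = 0 ∧ deval δF α B ≠ 0 ∧
        deval δF α (pderiv (dOrder A) A) ≠ 0) :
    IsDiffClosed δF := by
  intro A B hA hB hvars
  have hA0 : A ≠ 0 := fun h => hA 0 (by rw [h, map_zero])
  have hvne : A.vars.Nonempty := by
    rcases A.vars.eq_empty_or_nonempty with h | h
    · exfalso
      have hmem : A ∈ supported F (∅ : Set ℕ) := mem_supported.2 (by simp [h])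
      rw [supported_empty, Algebra.mem_bot] at hmem
      obtain ⟨c, hc⟩ := hmem
      exact hA c hc.symm
    · exact h
  have hrA : dOrder A ∈ A.vars := by
    obtain ⟨r', hr'mem, hr'⟩ := Finset.exists_mem_eq_sup A.vars hvne id
    rw [dOrder, hr']; exact hr'mem
  obtain ⟨P, hPirr, hPdvd, hPr⟩ := exists_irreducible_factor_mem_vars hA0 hrA
  have hPC : ∀ c : F, P ≠ C c := by
    intro c hc
    rw [hc] at hPr
    simp [vars_C] at hPr
  have hPB : ¬ P ∣ B := fun hd => absurd (hvars _ (mem_vars_of_dvd hB hd hPr)) (lt_irrefl _)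
  have hord : dOrder B ≤ dOrder P :=
    Finset.sup_le fun j hj => le_trans (le_of_lt (hvars j hj)) (Finset.le_sup (f := id) hPr)
  obtain ⟨α, hP0, hB0, _⟩ := hb P B hPirr hPC hPB hord
  obtain ⟨Q, hQ⟩ := hPdvd
  exact ⟨α, by rw [deval, hQ, map_mul, ← deval, ← deval, hP0, zero_mul], hB0⟩
end

section
/- Let F be a differential field of characteristic 0. The following two properties of F are equivalent: (f) for every n ≥ 1, every proper prime differential ideal of F{y₁,…,yₙ} has a common zero in Fⁿ; (g) for every n ≥ 1, every proper differential ideal of F{y₁,…,yₙ} has a common zero in Fⁿ. -/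
open MvPolynomial

/-- Evaluation of `f ∈ F{y₁,…,yₙ}` at `α ∈ Fⁿ`: substitute `δᵏ (α i)` for `yᵢ⁽ᵏ⁾`.
`F{y₁,…,yₙ}` is modelled as `MvPolynomial (Fin n × ℕ) F`, the variable `(i, k)` standing
for `yᵢ⁽ᵏ⁾`. -/
noncomputable def devalN {F : Type*} [CommRing F] (δ : Derivation ℤ F F) {n : ℕ}
    (α : Fin n → F) (f : MvPolynomial (Fin n × ℕ) F) : F :=
  aeval (fun p : Fin n × ℕ => (⇑δ)^[p.2] (α p.1)) f

/-- `D` is the derivation of `F{y₁,…,yₙ}` extending `δ` and sending `yᵢ⁽ᵏ⁾` to `yᵢ⁽ᵏ⁺¹⁾`. -/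
def IsDiffPolyDerivation {F : Type*} [CommRing F] (δ : Derivation ℤ F F) {n : ℕ}
    (D : Derivation ℤ (MvPolynomial (Fin n × ℕ) F) (MvPolynomial (Fin n × ℕ) F)) : Prop :=
  (∀ a : F, D (C a) = C (δ a)) ∧ ∀ p : Fin n × ℕ, D (X p) = X (p.1, p.2 + 1)



section aux
variable {R : Type*} [CommRing R] [Algebra ℚ R] (D : Derivation ℤ R R)

lemma nat_mul_mem' {I : Ideal R} {m : ℕ} (hm : m ≠ 0) {y : R} (h : (m : R) * y ∈ I) : y ∈ I := by
  have key : y = algebraMap ℚ R ((m : ℚ)⁻¹) * ((m : R) * y) := by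
    rw [← mul_assoc, ← map_natCast (algebraMap ℚ R) m, ← map_mul,
      inv_mul_cancel₀ (by exact_mod_cast hm), map_one, one_mul]
  rw [key]; exact I.mul_mem_left _ h

lemma diff_step' {I : Ideal R} (hI : ∀ f ∈ I, D f ∈ I) {x : R} {m j : ℕ}
    (h : x ^ (m + 1) * (D x) ^ (2 * j + 1) ∈ I) : x ^ m * (D x) ^ (2 * j + 3) ∈ I := by
  have h1 : D (x ^ (m + 1) * (D x) ^ (2 * j + 1)) ∈ I := hI _ h
  have h2 := I.sub_mem (I.mul_mem_left (D x) h1)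
    (I.mul_mem_left (((2 * j + 1 : ℕ) : R) * D (D x)) h)
  have key : ((m + 1 : ℕ) : R) * (x ^ m * (D x) ^ (2 * j + 3)) =
      D x * D (x ^ (m + 1) * (D x) ^ (2 * j + 1)) -
      ((2 * j + 1 : ℕ) : R) * D (D x) * (x ^ (m + 1) * (D x) ^ (2 * j + 1)) := by
    rw [Derivation.leibniz, Derivation.leibniz_pow, Derivation.leibniz_pow]
    simp only [Nat.add_sub_cancel, smul_eq_mul, nsmul_eq_mul]
    push_cast
    ring
  rw [← key] at h2
  exact nat_mul_mem' (Nat.succ_ne_zero m) h2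

lemma diff_pow_mem' {I : Ideal R} (hI : ∀ f ∈ I, D f ∈ I) {x : R} {n : ℕ}
    (h : x ^ (n + 1) ∈ I) : (D x) ^ (2 * n + 1) ∈ I := by
  have key : ∀ k, k ≤ n → x ^ (n - k) * (D x) ^ (2 * k + 1) ∈ I := by
    intro k
    induction k with
    | zero =>
      intro _
      have h1 : D (x ^ (n + 1)) ∈ I := hI _ h
      rw [Derivation.leibniz_pow] at h1
      simp only [Nat.add_sub_cancel, smul_eq_mul, nsmul_eq_mul] at h1
      have h2 : ((n + 1 : ℕ) : R) * (x ^ n * D x) ∈ I := h1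
      have := nat_mul_mem' (Nat.succ_ne_zero n) h2
      simpa using this
    | succ k ih =>
      intro hk
      have h1 := ih (Nat.le_of_succ_le hk)
      have e : n - k = (n - (k + 1)) + 1 := by omega
      rw [e] at h1
      have h2 := diff_step' D hI h1
      have e2 : 2 * (k + 1) + 1 = 2 * k + 3 := by ring
      rw [e2]
      exact h2
  have := key n le_rfl
  simpa using this

lemma radical_differential' {I : Ideal R} (hI : ∀ f ∈ I, D f ∈ I) :
    ∀ f ∈ I.radical, D f ∈ I.radical := by
  intro x hx
  obtain ⟨n, hn⟩ := Ideal.mem_radical_iff.mp hx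
  cases n with
  | zero =>
    have h1 : (1 : R) ∈ I := by simpa using hn
    exact Ideal.le_radical (by simpa using I.mul_mem_left (D x) h1)
  | succ n => exact Ideal.mem_radical_iff.mpr ⟨2 * n + 1, diff_pow_mem' D hI hn⟩

lemma maximal_diff_isPrime' {M : Ideal R} (hM : M ≠ ⊤) (hMd : ∀ f ∈ M, D f ∈ M)
    (hmax : ∀ I : Ideal R, I ≠ ⊤ → (∀ f ∈ I, D f ∈ I) → M ≤ I → I = M) : M.IsPrime := by
  have hrad : M.radical = M :=
    hmax M.radical (by rw [Ne, Ideal.radical_eq_top]; exact hM)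
      (radical_differential' D hMd) Ideal.le_radical
  refine ⟨hM, ?_⟩
  intro a b hab
  by_contra hcon
  push_neg at hcon
  obtain ⟨ha, hb⟩ := hcon
  let I : Ideal R :=
    { carrier := {x | x * b ∈ M}
      add_mem' := fun {p q} hp hq => by
        simp only [Set.mem_setOf_eq] at *
        rw [add_mul]; exact M.add_mem hp hq
      zero_mem' := by simp
      smul_mem' := fun c p hp => by
        simp only [smul_eq_mul, Set.mem_setOf_eq] at *
        rw [mul_assoc]; exact M.mul_mem_left c hp }
  have hmem : ∀ x : R, x ∈ I ↔ x * b ∈ M := fun x => Iff.rfl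
  have hId : ∀ f ∈ I, D f ∈ I := by
    intro f hf
    rw [hmem] at hf ⊢
    have h1 : D (f * b) ∈ M := hMd _ hf
    have h2 : (b * D f) * (b * D f) ∈ M := by
      have h3 := M.sub_mem (M.mul_mem_left (b * D f) h1) (M.mul_mem_left (D b * D f) hf)
      convert h3 using 1
      rw [Derivation.leibniz]
      simp only [smul_eq_mul]
      ring
    have h4 : b * D f ∈ M.radical := Ideal.mem_radical_iff.mpr ⟨2, by rw [pow_two]; exact h2⟩
    rw [hrad] at h4
    rwa [mul_comm]
  have hIne : I ≠ ⊤ := by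
    intro h
    have h1 : (1 : R) ∈ I := h ▸ Submodule.mem_top
    rw [hmem, one_mul] at h1
    exact hb h1
  have hMI : M ≤ I := fun x hx => M.mul_mem_right b hx
  have hIM := hmax I hIne hId hMI
  exact ha (hIM ▸ (hmem a).mpr hab)

end aux

lemma exists_maximal_diff {R : Type*} [CommRing R] (D : Derivation ℤ R R)
    (J : Ideal R) (hJ : J ≠ ⊤) (hJd : ∀ f ∈ J, D f ∈ J) :
    ∃ M : Ideal R, J ≤ M ∧ M ≠ ⊤ ∧ (∀ f ∈ M, D f ∈ M) ∧
      (∀ I : Ideal R, I ≠ ⊤ → (∀ f ∈ I, D f ∈ I) → M ≤ I → I = M) := by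
  set S : Set (Ideal R) := {I | J ≤ I ∧ I ≠ ⊤ ∧ ∀ f ∈ I, D f ∈ I} with hS
  have hJS : J ∈ S := ⟨le_rfl, hJ, hJd⟩
  obtain ⟨M, hJM, hMS, hMmax⟩ := zorn_le_nonempty₀ S (fun c hcS hc y hy => by
    refine ⟨sSup c, ⟨?_, ?_, ?_⟩, fun z hz => le_sSup hz⟩
    · exact le_trans (hcS hy).1 (le_sSup hy)
    · intro htop
      have h1 : (1 : R) ∈ sSup c := htop ▸ Submodule.mem_top
      obtain ⟨I, hIc, hI1⟩ := (Submodule.mem_sSup_of_directed ⟨y, hy⟩ hc.directedOn).1 h1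
      exact (hcS hIc).2.1 ((Ideal.eq_top_iff_one I).mpr hI1)
    · intro f hf
      obtain ⟨I, hIc, hfI⟩ := (Submodule.mem_sSup_of_directed ⟨y, hy⟩ hc.directedOn).1 hf
      exact le_sSup hIc ((hcS hIc).2.2 f hfI)) J hJS
  refine ⟨M, hJM, hMS.2.1, hMS.2.2, fun I hIne hId hMI => ?_⟩
  exact le_antisymm (hMmax ⟨le_trans hJM hMI, hIne, hId⟩ hMI) hMI

/-- (Kac, Theorem 3, (f) ⇔ (g).) For a differential field `F` of characteristic 0 the
following are equivalent: (f) for every `n ≥ 1`, every proper prime differential ideal of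
`F{y₁,…,yₙ}` has a common zero in `Fⁿ`; (g) for every `n ≥ 1`, every proper differential
ideal of `F{y₁,…,yₙ}` has a common zero in `Fⁿ`. -/
theorem stmt10 {F : Type} [Field F] [CharZero F] (δF : Derivation ℤ F F) :
    (∀ (n : ℕ), 1 ≤ n →
      ∀ D : Derivation ℤ (MvPolynomial (Fin n × ℕ) F) (MvPolynomial (Fin n × ℕ) F),
        IsDiffPolyDerivation δF D →
      ∀ J : Ideal (MvPolynomial (Fin n × ℕ) F), J ≠ ⊤ → J.IsPrime → (∀ f ∈ J, D f ∈ J) →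
      ∃ α : Fin n → F, ∀ f ∈ J, devalN δF α f = 0)
    ↔
    (∀ (n : ℕ), 1 ≤ n →
      ∀ D : Derivation ℤ (MvPolynomial (Fin n × ℕ) F) (MvPolynomial (Fin n × ℕ) F),
        IsDiffPolyDerivation δF D →
      ∀ J : Ideal (MvPolynomial (Fin n × ℕ) F), J ≠ ⊤ → (∀ f ∈ J, D f ∈ J) →
      ∃ α : Fin n → F, ∀ f ∈ J, devalN δF α f = 0) := by
  constructor
  · -- (f) → (g)
    intro hf n hn D hD J hJ hJd
    obtain ⟨M, hJM, hMne, hMd, hMmax⟩ := exists_maximal_diff D J hJ hJd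
    have hMprime : M.IsPrime := maximal_diff_isPrime' D hMne hMd hMmax
    obtain ⟨α, hα⟩ := hf n hn D hD M hMne hMprime hMd
    exact ⟨α, fun f hfJ => hα f (hJM hfJ)⟩
  · -- (g) → (f)
    intro hg n hn D hD J hJ _ hJd
    exact hg n hn D hD J hJ hJd
end

section
/- Let F be a differential field of characteristic 0. The following two properties of F are equivalent: (f) for every n ≥ 1, every proper prime differential ideal of F{y₁,…,yₙ} has a common zero in Fⁿ; (h) for every n ≥ 1, every differential ideal of F{y₁,…,yₙ} that is maximal among proper differential ideals has a common zero in Fⁿ. -/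
open MvPolynomial

open MvPolynomial

section Aux

variable {R : Type*} [CommRing R] [Algebra ℚ R]

lemma div_nat_mem (J : Ideal R) {m : ℕ} (hm : m ≠ 0) {y : R} (h : (m : R) * y ∈ J) : y ∈ J := by
  have h2 := J.mul_mem_left (algebraMap ℚ R (m : ℚ)⁻¹) h
  rwa [show ((m : R)) = algebraMap ℚ R (m : ℚ) by simp, ← mul_assoc, ← map_mul,
    inv_mul_cancel₀ (by exact_mod_cast hm), map_one, one_mul] at h2

lemma pow_deriv_mem (D : Derivation ℤ R R) (J : Ideal R) (hJ : ∀ f ∈ J, D f ∈ J)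
    {x : R} {n : ℕ} (hx : x ^ n ∈ J) : (D x) ^ (2 * n) ∈ J := by
  have key : ∀ k ≤ n, x ^ (n - k) * (D x) ^ (2 * k) ∈ J := by
    intro k
    induction k with
    | zero => intro _; simpa using hx
    | succ k ih =>
      intro hk
      have hk' : k ≤ n := Nat.le_of_succ_le hk
      obtain ⟨j, hj⟩ : ∃ j, n - k = j + 1 := ⟨n - k - 1, by omega⟩
      have h1 : x ^ (j + 1) * D x ^ (2 * k) ∈ J := by rw [← hj]; exact ih hk'
      have h2 := J.mul_mem_left (D x) (hJ _ h1)
      have heq : D x * D (x ^ (j + 1) * D x ^ (2 * k))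
          = ((2 * k : ℕ) : R) * (x ^ (j + 1) * D x ^ (2 * k) * D (D x))
            + (((j + 1 : ℕ) : R)) * (x ^ j * D x ^ (2 * (k + 1))) := by
        rw [Derivation.leibniz, Derivation.leibniz_pow, Derivation.leibniz_pow]
        simp only [smul_eq_mul, nsmul_eq_mul, Nat.add_sub_cancel]
        cases k with
        | zero => simp; ring
        | succ k =>
          have e : 2 * (k + 1) - 1 = 2 * k + 1 := by omega
          rw [e]
          push_cast
          ring
      have ht : ((2 * k : ℕ) : R) * (x ^ (j + 1) * D x ^ (2 * k) * D (D x)) ∈ J :=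
        Ideal.mul_mem_left _ _ (Ideal.mul_mem_right _ _ h1)
      have hmem : (((j + 1 : ℕ)) : R) * (x ^ j * D x ^ (2 * (k + 1))) ∈ J := by
        have hs := J.sub_mem (heq ▸ h2) ht
        simpa [add_sub_cancel_left] using hs
      have hres := div_nat_mem J (show (j + 1 : ℕ) ≠ 0 by omega) hmem
      have hj2 : n - (k + 1) = j := by omega
      rw [hj2]; exact hres
  simpa using key n le_rfl

lemma radical_diff (D : Derivation ℤ R R) (J : Ideal R) (hJ : ∀ f ∈ J, D f ∈ J)
    (x : R) (hx : x ∈ J.radical) : D x ∈ J.radical := by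
  obtain ⟨n, hn⟩ := hx
  exact ⟨2 * n, pow_deriv_mem D J hJ hn⟩

lemma maximal_diff_prime (D : Derivation ℤ R R) (J : Ideal R) (hJ : ∀ f ∈ J, D f ∈ J)
    (hne : J ≠ ⊤)
    (hmax : ∀ J' : Ideal R, (∀ f ∈ J', D f ∈ J') → J < J' → J' = ⊤) : J.IsPrime := by
  have hrad : J.radical = J := by
    by_contra h
    have hlt : J < J.radical := lt_of_le_of_ne J.le_radical (Ne.symm h)
    have := hmax J.radical (radical_diff D J hJ) hlt
    rw [Ideal.radical_eq_top] at this
    exact hne this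
  constructor
  · exact hne
  · intro a b hab
    by_contra hcon
    push_neg at hcon
    obtain ⟨ha, hb⟩ := hcon
    set I := J.colon (Ideal.span {a}) with hI
    have hmemI : ∀ x, x ∈ I ↔ a * x ∈ J := by
      intro x; rw [hI, Ideal.mem_colon_span_singleton, mul_comm]
    have hIdiff : ∀ f ∈ I, D f ∈ I := by
      intro f hf
      rw [hmemI] at hf ⊢
      have h1 := hJ _ hf
      rw [Derivation.leibniz, smul_eq_mul, smul_eq_mul] at h1
      have h2 := J.mul_mem_left (a * D f) h1
      have h3 : a * f * (D a * D f) ∈ J := Ideal.mul_mem_right _ _ hf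
      have h4 : (a * D f) ^ 2 ∈ J := by
        have hs := J.sub_mem h2 h3
        have e : a * D f * (a * D f + f * D a) - a * f * (D a * D f) = (a * D f) ^ 2 := by ring
        rwa [e] at hs
      have : a * D f ∈ J.radical := ⟨2, h4⟩
      rwa [hrad] at this
    have hJI : J ≤ I := fun x hx => (hmemI x).2 (Ideal.mul_mem_left _ _ hx)
    have hbI : b ∈ I := (hmemI b).2 hab
    have hlt : J < I := lt_of_le_of_ne hJI (by intro h; rw [h] at hb; exact hb hbI)
    have hItop := hmax I hIdiff hlt
    have h1I : (1 : R) ∈ I := hItop ▸ Submodule.mem_top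
    have := (hmemI 1).1 h1I
    rw [mul_one] at this
    exact ha this

lemma exists_max_diff (D : Derivation ℤ R R) (J : Ideal R) (hJ : ∀ f ∈ J, D f ∈ J)
    (hne : J ≠ ⊤) :
    ∃ M : Ideal R, J ≤ M ∧ M ≠ ⊤ ∧ (∀ f ∈ M, D f ∈ M) ∧
      ∀ J' : Ideal R, (∀ f ∈ J', D f ∈ J') → M < J' → J' = ⊤ := by
  set S : Set (Ideal R) := {I | I ≠ ⊤ ∧ ∀ f ∈ I, D f ∈ I} with hS
  have hJS : J ∈ S := ⟨hne, hJ⟩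
  have hchainub : ∀ c ⊆ S, IsChain (· ≤ ·) c → ∀ y ∈ c, ∃ ub ∈ S, ∀ z ∈ c, z ≤ ub := by
    intro c hcS hchain y hy
    refine ⟨sSup c, ⟨?_, ?_⟩, fun z hz => le_sSup hz⟩
    · intro htop
      have h1 : (1 : R) ∈ sSup c := htop ▸ Submodule.mem_top
      obtain ⟨I, hIc, h1I⟩ := (Submodule.mem_sSup_of_directed ⟨y, hy⟩ hchain.directedOn).1 h1
      exact (hcS hIc).1 ((Ideal.eq_top_iff_one I).2 h1I)
    · intro f hf
      obtain ⟨I, hIc, hfI⟩ := (Submodule.mem_sSup_of_directed ⟨y, hy⟩ hchain.directedOn).1 hf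
      exact le_sSup hIc ((hcS hIc).2 f hfI)
  obtain ⟨M, hJM, hMS, hMmax⟩ := zorn_le_nonempty₀ S hchainub J hJS
  refine ⟨M, hJM, hMS.1, hMS.2, ?_⟩
  intro J' hJ'diff hlt
  by_contra hJ'top
  have hJ'S : J' ∈ S := ⟨hJ'top, hJ'diff⟩
  exact absurd (hMmax hJ'S hlt.le) (not_le_of_gt hlt)

end Aux

/-- (Kac, Theorem 3, (f) ⇔ (h).) For a differential field `F` of characteristic 0 the
following are equivalent: (f) for every `n ≥ 1`, every proper prime differential ideal of
`F{y₁,…,yₙ}` has a common zero in `Fⁿ`; (h) for every `n ≥ 1`, every differential ideal of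
`F{y₁,…,yₙ}` maximal among proper differential ideals has a common zero in `Fⁿ`. -/
theorem stmt11 {F : Type} [Field F] [CharZero F] (δF : Derivation ℤ F F) :
    (∀ (n : ℕ), 1 ≤ n →
      ∀ D : Derivation ℤ (MvPolynomial (Fin n × ℕ) F) (MvPolynomial (Fin n × ℕ) F),
        IsDiffPolyDerivation δF D →
      ∀ J : Ideal (MvPolynomial (Fin n × ℕ) F), J ≠ ⊤ → J.IsPrime → (∀ f ∈ J, D f ∈ J) →
      ∃ α : Fin n → F, ∀ f ∈ J, devalN δF α f = 0)
    ↔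
    (∀ (n : ℕ), 1 ≤ n →
      ∀ D : Derivation ℤ (MvPolynomial (Fin n × ℕ) F) (MvPolynomial (Fin n × ℕ) F),
        IsDiffPolyDerivation δF D →
      ∀ J : Ideal (MvPolynomial (Fin n × ℕ) F), J ≠ ⊤ → (∀ f ∈ J, D f ∈ J) →
      (∀ J' : Ideal (MvPolynomial (Fin n × ℕ) F), (∀ f ∈ J', D f ∈ J') → J < J' → J' = ⊤) →
      ∃ α : Fin n → F, ∀ f ∈ J, devalN δF α f = 0) := by
  constructor
  · intro hf n hn D hD J hne hJdiff hmax
    have hprime := maximal_diff_prime D J hJdiff hne hmax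
    exact hf n hn D hD J hne hprime hJdiff
  · intro hh n hn D hD J hne hprime hJdiff
    obtain ⟨M, hJM, hMne, hMdiff, hMmax⟩ := exists_max_diff D J hJdiff hne
    obtain ⟨α, hα⟩ := hh n hn D hD M hMne hMdiff hMmax
    exact ⟨α, fun f hf => hα f (hJM hf)⟩
end
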